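/- arXiv:1704.01671 — 4 statements merged into one kernel-verified Lean document; each statement's English description precedes it below -/
import Mathlib

section
/- There exists a matrix P ∈ GL(3, ℤ) such that Pᵀ M' P equals the block-diagonal matrix [[0,3],[3,-2]] ⊕ [(-2)]; that is, the lattice (ℤ³, M') is isometric to the orthogonal direct sum of the rank-2 lattice with Gram matrix [[0,3],[3,-2]] and A1. -/
open Matrix

def M' : Matrix (Fin 3) (Fin 3) ℤ :=
  !![-2, 2, 0;
    2, -2, 3;
    0, 3, -2]

def B : Matrix (Fin 3) (Fin 3) ℤ :=
  !![0, 3, 0;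
    3, -2, 0;
    0, 0, -2]

theorem stmt_5 :
    (∃ P : Matrix (Fin 3) (Fin 3) ℤ,
      (P.det = 1 ∨ P.det = -1) ∧ Pᵀ * M' * P = B) := by
  refine ⟨!![-1,0,-1;-1,0,0;0,-1,0], Or.inr ?_, ?_⟩ <;>
    simp [M', B, Matrix.det_fin_three, Matrix.mul_fin_three] <;>
    decide
end

section
/- The determinant of M equals 18, and the cokernel ℤ¹⁷ / M·ℤ¹⁷ of the linear map ℤ¹⁷ → ℤ¹⁷ given by M is isomorphic as an abelian group to (ℤ/9ℤ) × (ℤ/2ℤ). In particular the discriminant group of the lattice (ℤ¹⁷, M) has minimal number of generators 2. -/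
open Matrix

def M : Matrix (Fin 17) (Fin 17) ℤ :=
  !![-2, 1, 0, 0, 0, 0, 0, 0, 0, 1, 0, 0, 0, 0, 0, 0, 0;
    1, -2, 0, 0, 0, 0, 0, 0, 0, 0, 0, 1, 0, 0, 0, 1, 0;
    0, 0, -2, 0, 0, 0, 0, 1, 0, 0, 0, 0, 0, 0, 1, 0, 1;
    0, 0, 0, -2, 0, 0, 1, 1, 1, 0, 0, 0, 0, 0, 0, 0, 0;
    0, 0, 0, 0, -2, 0, 0, 0, 1, 0, 0, 0, 0, 0, 0, 0, 0;
    0, 0, 0, 0, 0, -2, 0, 0, 0, 0, 0, 0, 1, 1, 0, 0, 0;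
    0, 0, 0, 1, 0, 0, -2, 0, 0, 0, 0, 0, 0, 0, 0, 0, 0;
    0, 0, 1, 1, 0, 0, 0, -2, 0, 0, 0, 0, 0, 0, 0, 0, 0;
    0, 0, 0, 1, 1, 0, 0, 0, -2, 0, 0, 0, 0, 0, 0, 0, 0;
    1, 0, 0, 0, 0, 0, 0, 0, 0, -2, 1, 0, 0, 0, 0, 0, 0;
    0, 0, 0, 0, 0, 0, 0, 0, 0, 1, -2, 0, 0, 0, 0, 0, 0;
    0, 1, 0, 0, 0, 0, 0, 0, 0, 0, 0, -2, 1, 0, 0, 0, 0;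
    0, 0, 0, 0, 0, 1, 0, 0, 0, 0, 0, 1, -2, 0, 0, 0, 0;
    0, 0, 0, 0, 0, 1, 0, 0, 0, 0, 0, 0, 0, -2, 1, 0, 0;
    0, 0, 1, 0, 0, 0, 0, 0, 0, 0, 0, 0, 0, 1, -2, 0, 0;
    0, 1, 0, 0, 0, 0, 0, 0, 0, 0, 0, 0, 0, 0, 0, -2, 1;
    0, 0, 1, 0, 0, 0, 0, 0, 0, 0, 0, 0, 0, 0, 0, 1, -2]

/-!
Fraction-free Gaussian elimination gives `L * M = U` with `L` lower and `U` upper triangular, and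
comparing diagonals yields `det M = 18`. Since `|det M|` is the order of the cokernel, the cokernel
has 18 elements, so a functional `ℤ¹⁷ → ℤ/18` that kills the columns of `M` and hits `1` induces an
isomorphism from the cokernel onto `ℤ/18 ≅ ℤ/9 × ℤ/2`.
-/

namespace Matrix

theorem prod_diag_mul_det_eq_prod_diag {n R : Type*} [Fintype n] [DecidableEq n]
    [LinearOrder n] [CommRing R] {L A U : Matrix n n R} (hL : L.IsLowerTriangular)
    (hU : U.IsUpperTriangular) (h : L * A = U) :
    (∏ i, L i i) * A.det = ∏ i, U i i := by
  rw [← det_of_isLowerTriangular L hL, ← det_of_isUpperTriangular hU, ← det_mul, h]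

variable {n : Type*} [Fintype n] [DecidableEq n]

theorem natCard_quotient_range_toLin' (A : Matrix n n ℤ) (hA : A.det ≠ 0) :
    Nat.card ((n → ℤ) ⧸ LinearMap.range A.toLin') = A.det.natAbs := by
  have hinj : Function.Injective A.toLin' := by
    rw [← LinearMap.ker_eq_bot, LinearMap.ker_eq_bot']
    intro v hv
    by_contra hne
    exact hA (exists_mulVec_eq_zero_iff.mp ⟨v, hne, hv⟩)
  rw [← Submodule.natAbs_det_equiv _ (LinearEquiv.ofInjective _ hinj).toAddEquiv,
    ← LinearMap.det_toLin' A]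
  rfl

theorem nonempty_quotient_range_toLin'_addEquiv_zmod (A : Matrix n n ℤ) {m : ℕ} [NeZero m]
    (hdet : A.det.natAbs = m) (r : n → ZMod m)
    (hr : ∀ j, Fintype.linearCombination ℤ r (A.col j) = 0) (hr₁ : ∃ i, r i = 1) :
    Nonempty (((n → ℤ) ⧸ LinearMap.range A.toLin') ≃+ ZMod m) := by
  set φ := Fintype.linearCombination ℤ r
  have hle : LinearMap.range A.toLin' ≤ LinearMap.ker φ := by
    rw [toLin'_apply', range_mulVecLin, Submodule.span_le]
    rintro _ ⟨j, rfl⟩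
    exact hr j
  have hφ : Function.Surjective φ := by
    obtain ⟨i, hi⟩ := hr₁
    refine fun z ↦ ⟨(z.cast : ℤ) • Pi.single i 1, ?_⟩
    rw [map_zsmul, Fintype.linearCombination_apply_single, one_smul, hi, zsmul_one,
      ZMod.intCast_zmod_cast]
  have hcard : Nat.card ((n → ℤ) ⧸ LinearMap.range A.toLin') = m := by
    rw [natCard_quotient_range_toLin' A (Int.natAbs_ne_zero.mp (hdet ▸ NeZero.ne m)), hdet]
  have : Finite ((n → ℤ) ⧸ LinearMap.range A.toLin') :=
    Nat.finite_of_card_ne_zero (hcard ▸ NeZero.ne m)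
  have hbij : Function.Bijective (Submodule.liftQ _ φ hle) := by
    refine Function.Surjective.bijective_of_nat_card_le ?_ (by rw [hcard, Nat.card_zmod])
    rw [← LinearMap.range_eq_top, Submodule.range_liftQ, LinearMap.range_eq_top]
    exact hφ
  exact ⟨(LinearEquiv.ofBijective _ hbij).toAddEquiv⟩

end Matrix

def M_rowOps : Matrix (Fin 17) (Fin 17) ℤ :=
  !![1, 0, 0, 0, 0, 0, 0, 0, 0, 0, 0, 0, 0, 0, 0, 0, 0;
    1, 2, 0, 0, 0, 0, 0, 0, 0, 0, 0, 0, 0, 0, 0, 0, 0;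
    0, 0, 1, 0, 0, 0, 0, 0, 0, 0, 0, 0, 0, 0, 0, 0, 0;
    0, 0, 0, 1, 0, 0, 0, 0, 0, 0, 0, 0, 0, 0, 0, 0, 0;
    0, 0, 0, 0, 1, 0, 0, 0, 0, 0, 0, 0, 0, 0, 0, 0, 0;
    0, 0, 0, 0, 0, 1, 0, 0, 0, 0, 0, 0, 0, 0, 0, 0, 0;
    0, 0, 0, 1, 0, 0, 2, 0, 0, 0, 0, 0, 0, 0, 0, 0, 0;
    0, 0, 3, 4, 0, 0, 2, 6, 0, 0, 0, 0, 0, 0, 0, 0, 0;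
    0, 0, 4, 12, 5, 0, 6, 8, 10, 0, 0, 0, 0, 0, 0, 0, 0;
    2, 1, 0, 0, 0, 0, 0, 0, 0, 3, 0, 0, 0, 0, 0, 0, 0;
    2, 1, 0, 0, 0, 0, 0, 0, 0, 3, 4, 0, 0, 0, 0, 0, 0;
    3, 4, 0, 0, 0, 0, 0, 0, 0, 2, 1, 5, 0, 0, 0, 0, 0;
    3, 4, 0, 0, 0, 3, 0, 0, 0, 2, 1, 5, 6, 0, 0, 0, 0;
    3, 4, 0, 0, 0, 7, 0, 0, 0, 2, 1, 5, 6, 8, 0, 0, 0;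
    3, 4, 12, 18, 6, 7, 9, 15, 12, 2, 1, 5, 6, 8, 9, 0, 0;
    3, 4, -8, -12, -4, -2, -6, -10, -8, 2, 1, 2, 0, -4, -6, 3, 0;
    -9, -12, 0, 0, 0, -6, 0, 0, 0, -6, -3, -10, -8, -4, -2, -5, 2]

def M_echelon : Matrix (Fin 17) (Fin 17) ℤ :=
  !![-2, 1, 0, 0, 0, 0, 0, 0, 0, 1, 0, 0, 0, 0, 0, 0, 0;
    0, -3, 0, 0, 0, 0, 0, 0, 0, 1, 0, 2, 0, 0, 0, 2, 0;
    0, 0, -2, 0, 0, 0, 0, 1, 0, 0, 0, 0, 0, 0, 1, 0, 1;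
    0, 0, 0, -2, 0, 0, 1, 1, 1, 0, 0, 0, 0, 0, 0, 0, 0;
    0, 0, 0, 0, -2, 0, 0, 0, 1, 0, 0, 0, 0, 0, 0, 0, 0;
    0, 0, 0, 0, 0, -2, 0, 0, 0, 0, 0, 0, 1, 1, 0, 0, 0;
    0, 0, 0, 0, 0, 0, -3, 1, 1, 0, 0, 0, 0, 0, 0, 0, 0;
    0, 0, 0, 0, 0, 0, 0, -5, 4, 0, 0, 0, 0, 0, 3, 0, 3;
    0, 0, 0, 0, 0, 0, 0, 0, -3, 0, 0, 0, 0, 0, 4, 0, 4;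
    0, 0, 0, 0, 0, 0, 0, 0, 0, -4, 3, 1, 0, 0, 0, 1, 0;
    0, 0, 0, 0, 0, 0, 0, 0, 0, 0, -5, 1, 0, 0, 0, 1, 0;
    0, 0, 0, 0, 0, 0, 0, 0, 0, 0, 0, -6, 5, 0, 0, 4, 0;
    0, 0, 0, 0, 0, 0, 0, 0, 0, 0, 0, 0, -4, 3, 0, 4, 0;
    0, 0, 0, 0, 0, 0, 0, 0, 0, 0, 0, 0, 0, -9, 8, 4, 0;
    0, 0, 0, 0, 0, 0, 0, 0, 0, 0, 0, 0, 0, 0, 2, 4, 12;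
    0, 0, 0, 0, 0, 0, 0, 0, 0, 0, 0, 0, 0, 0, 0, -2, -5;
    0, 0, 0, 0, 0, 0, 0, 0, 0, 0, 0, 0, 0, 0, 0, 0, -9]

theorem M_rowOps_mul_M : M_rowOps * M = M_echelon := by decide +kernel

theorem det_M : M.det = 18 := by
  have h := prod_diag_mul_det_eq_prod_diag (by decide +kernel) (by decide +kernel) M_rowOps_mul_M
  have hL : ∏ i, M_rowOps i i = 37324800 := by decide +kernel
  have hU : ∏ i, M_echelon i i = 671846400 := by decide +kernel
  rw [hL, hU] at h
  omega

/-- A generator of the left kernel of `M` over `ℤ/18`, read off from a Smith normal form of `M`. -/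
def M_cokerFunctional : Fin 17 → ZMod 18 :=
  ![9, 6, 0, 0, 0, 3, 9, 9, 0, -6, -3, 5, 4, 2, 1, -2, 8]

theorem stmt_7 :
    M.det = 18 ∧
    Nonempty (((Fin 17 → ℤ) ⧸ LinearMap.range (Matrix.toLin' M)) ≃+ (ZMod 9 × ZMod 2)) := by
  refine ⟨det_M, ?_⟩
  obtain ⟨e⟩ := nonempty_quotient_range_toLin'_addEquiv_zmod M (m := 18) (by rw [det_M]; rfl)
    M_cokerFunctional (by decide +kernel) ⟨14, rfl⟩
  exact ⟨e.trans (ZMod.chineseRemainder (by norm_num : Nat.Coprime 9 2)).toAddEquiv⟩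
end

section
/- There exists a primitive embedding of the lattice (ℤ¹⁷, M) into the K3 lattice: an injective ℤ-linear map ι : ℤ¹⁷ → ℤ²² with (ι x)ᵀ G (ι y) = xᵀ M y for all x, y ∈ ℤ¹⁷, such that ℤ²² / ι(ℤ¹⁷) is torsion-free. -/
open Matrix

def GK3 : Matrix (Fin 22) (Fin 22) ℤ :=
  !![0, 1, 0, 0, 0, 0, 0, 0, 0, 0, 0, 0, 0, 0, 0, 0, 0, 0, 0, 0, 0, 0;
    1, 0, 0, 0, 0, 0, 0, 0, 0, 0, 0, 0, 0, 0, 0, 0, 0, 0, 0, 0, 0, 0;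
    0, 0, 0, 1, 0, 0, 0, 0, 0, 0, 0, 0, 0, 0, 0, 0, 0, 0, 0, 0, 0, 0;
    0, 0, 1, 0, 0, 0, 0, 0, 0, 0, 0, 0, 0, 0, 0, 0, 0, 0, 0, 0, 0, 0;
    0, 0, 0, 0, 0, 1, 0, 0, 0, 0, 0, 0, 0, 0, 0, 0, 0, 0, 0, 0, 0, 0;
    0, 0, 0, 0, 1, 0, 0, 0, 0, 0, 0, 0, 0, 0, 0, 0, 0, 0, 0, 0, 0, 0;
    0, 0, 0, 0, 0, 0, -2, 0, 1, 0, 0, 0, 0, 0, 0, 0, 0, 0, 0, 0, 0, 0;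
    0, 0, 0, 0, 0, 0, 0, -2, 0, 1, 0, 0, 0, 0, 0, 0, 0, 0, 0, 0, 0, 0;
    0, 0, 0, 0, 0, 0, 1, 0, -2, 1, 0, 0, 0, 0, 0, 0, 0, 0, 0, 0, 0, 0;
    0, 0, 0, 0, 0, 0, 0, 1, 1, -2, 1, 0, 0, 0, 0, 0, 0, 0, 0, 0, 0, 0;
    0, 0, 0, 0, 0, 0, 0, 0, 0, 1, -2, 1, 0, 0, 0, 0, 0, 0, 0, 0, 0, 0;
    0, 0, 0, 0, 0, 0, 0, 0, 0, 0, 1, -2, 1, 0, 0, 0, 0, 0, 0, 0, 0, 0;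
    0, 0, 0, 0, 0, 0, 0, 0, 0, 0, 0, 1, -2, 1, 0, 0, 0, 0, 0, 0, 0, 0;
    0, 0, 0, 0, 0, 0, 0, 0, 0, 0, 0, 0, 1, -2, 0, 0, 0, 0, 0, 0, 0, 0;
    0, 0, 0, 0, 0, 0, 0, 0, 0, 0, 0, 0, 0, 0, -2, 0, 1, 0, 0, 0, 0, 0;
    0, 0, 0, 0, 0, 0, 0, 0, 0, 0, 0, 0, 0, 0, 0, -2, 0, 1, 0, 0, 0, 0;
    0, 0, 0, 0, 0, 0, 0, 0, 0, 0, 0, 0, 0, 0, 1, 0, -2, 1, 0, 0, 0, 0;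
    0, 0, 0, 0, 0, 0, 0, 0, 0, 0, 0, 0, 0, 0, 0, 1, 1, -2, 1, 0, 0, 0;
    0, 0, 0, 0, 0, 0, 0, 0, 0, 0, 0, 0, 0, 0, 0, 0, 0, 1, -2, 1, 0, 0;
    0, 0, 0, 0, 0, 0, 0, 0, 0, 0, 0, 0, 0, 0, 0, 0, 0, 0, 1, -2, 1, 0;
    0, 0, 0, 0, 0, 0, 0, 0, 0, 0, 0, 0, 0, 0, 0, 0, 0, 0, 0, 1, -2, 1;
    0, 0, 0, 0, 0, 0, 0, 0, 0, 0, 0, 0, 0, 0, 0, 0, 0, 0, 0, 0, 1, -2]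


def Bemb : Matrix (Fin 22) (Fin 17) ℤ :=
  !![1, 0, 0, 0, 0, 0, 0, 1, 0, 0, 0, 0, 0, 0, 0, 0, 0;
    0, 1, 0, 0, 0, 0, 0, 6, 0, 0, 0, 0, 0, 0, 0, 0, 0;
    0, 0, 0, 0, 0, 0, 0, 0, 0, 0, 0, 1, 0, 0, 0, 0, 0;
    0, 0, 0, 0, 0, 0, 0, 0, 0, 0, 0, 0, 0, 0, 0, 0, 0;
    1, 0, 0, 0, 0, 0, 0, 0, 0, 0, 0, 0, 0, 0, 0, 0, 0;
    1, 0, 0, 0, 0, 0, 0, 0, 0, 0, 0, 0, 0, 0, 0, 0, 0;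
    0, 0, 0, 0, 0, 0, 0, 1, 0, 0, 0, 0, 1, 1, -1, 0, -1;
    0, 0, 0, 0, 0, -1, 0, 1, 0, 0, 0, 0, 2, 1, 0, 0, -2;
    0, 0, -1, 0, 0, 0, 0, 2, 0, 0, 0, 0, 2, 1, 0, 0, -2;
    0, -1, -1, 0, 0, -1, 0, 2, 0, 0, 0, 1, 3, 2, 0, 0, -3;
    0, -1, -1, 0, 0, -1, 0, 2, 0, 0, 0, 1, 2, 2, 0, 1, -3;
    0, -1, 0, 0, 0, 0, 0, 1, 0, 0, 0, 1, 1, 1, 0, 1, -3;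
    0, -1, 0, 0, 0, 0, 0, 1, 0, 0, 0, 1, 1, 0, 0, 1, -2;
    0, 0, 0, 0, 0, 0, 0, 1, 0, 0, 0, 1, 0, 0, 0, 0, -1;
    -4, 0, 0, 0, 0, 0, 0, -6, 0, 1, 0, 0, 0, 0, 0, 0, 0;
    -5, 0, 0, 0, 0, 0, 0, -9, 0, 0, 0, 0, 0, 0, 0, 0, 0;
    -7, 0, 0, 0, 0, 0, 0, -12, 0, 0, 1, 0, 0, 0, 0, 0, 0;
    -10, 0, 0, 0, 0, 0, 0, -18, 0, 0, 0, 0, 0, 0, 0, 0, 0;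
    -8, 0, 0, 0, 0, 0, 1, -15, 0, 0, 0, 0, 0, 0, 0, 0, 0;
    -6, 0, 0, 1, 0, 0, 0, -12, 0, 0, 0, 0, 0, 0, 0, 0, 0;
    -4, 0, 0, 0, 0, 0, 0, -8, 1, 0, 0, 0, 0, 0, 0, 0, 0;
    -2, 0, 0, 0, 1, 0, 0, -4, 0, 0, 0, 0, 0, 0, 0, 0, 0]

def Lemb : Matrix (Fin 17) (Fin 22) ℤ :=
  !![0, 0, 0, 0, 1, 0, 0, 0, 0, 0, 0, 0, 0, 0, 0, 0, 0, 0, 0, 0, 0, 0;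
    -6, 1, 0, 0, 6, 0, 0, 0, 0, 0, 0, 0, 0, 0, 0, 0, 0, 0, 0, 0, 0, 0;
    -4, 1, 0, 0, 4, 0, 0, 0, -1, 1, -1, 1, 0, -1, 0, 0, 0, 0, 0, 0, 0, 0;
    12, 0, 0, 0, -6, 0, 0, 0, 0, 0, 0, 0, 0, 0, 0, 0, 0, 0, 0, 1, 0, 0;
    4, 0, 0, 0, -2, 0, 0, 0, 0, 0, 0, 0, 0, 0, 0, 0, 0, 0, 0, 0, 0, 1;
    -5, 1, 0, 0, 5, 0, 0, -1, 0, 1, -1, 1, 0, -1, 0, 0, 0, 0, 0, 0, 0, 0;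
    15, 0, 0, 0, -7, 0, 0, 0, 0, 0, 0, 0, 0, 0, 0, 0, 0, 0, 1, 0, 0, 0;
    1, 0, 0, 0, -1, 0, 0, 0, 0, 0, 0, 0, 0, 0, 0, 0, 0, 0, 0, 0, 0, 0;
    8, 0, 0, 0, -4, 0, 0, 0, 0, 0, 0, 0, 0, 0, 0, 0, 0, 0, 0, 0, 1, 0;
    6, 0, 0, 0, -2, 0, 0, 0, 0, 0, 0, 0, 0, 0, 1, 0, 0, 0, 0, 0, 0, 0;
    12, 0, 0, 0, -5, 0, 0, 0, 0, 0, 0, 0, 0, 0, 0, 0, 1, 0, 0, 0, 0, 0;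
    0, 0, 1, 0, 0, 0, 0, 0, 0, 0, 0, 0, 0, 0, 0, 0, 0, 0, 0, 0, 0, 0;
    6, -1, 2, 0, -6, 0, 0, 1, 1, -1, 0, 0, 0, -1, 0, 0, 0, 0, 0, 0, 0, 0;
    -16, 3, -2, 0, 16, 0, 0, -2, -2, 3, -1, 1, 0, -1, 0, 0, 0, 0, 0, 0, 0, 0;
    -10, 2, -1, 0, 10, 0, -1, -1, -1, 2, -1, 1, 0, -1, 0, 0, 0, 0, 0, 0, 0, 0;
    6, -1, 2, 0, -6, 0, 0, 1, 1, -2, 1, 0, 0, -1, 0, 0, 0, 0, 0, 0, 0, 0;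
    1, 0, 1, 0, -1, 0, 0, 0, 0, 0, 0, 0, 0, -1, 0, 0, 0, 0, 0, 0, 0, 0]

set_option maxHeartbeats 4000000 in
set_option maxRecDepth 100000 in
lemma hLB : Lemb * Bemb = 1 := by decide

set_option maxHeartbeats 4000000 in
set_option maxRecDepth 100000 in
lemma hBGB : Bembᵀ * GK3 * Bemb = M := by decide

theorem stmt_8 :
    ∃ ι : (Fin 17 → ℤ) →ₗ[ℤ] (Fin 22 → ℤ),
      Function.Injective ι ∧
      (∀ x y : Fin 17 → ℤ, ι x ⬝ᵥ (GK3 *ᵥ ι y) = x ⬝ᵥ (M *ᵥ y)) ∧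
      (∀ (v : Fin 22 → ℤ) (k : ℤ), k ≠ 0 → k • v ∈ LinearMap.range ι → v ∈ LinearMap.range ι) := by
  refine ⟨Bemb.mulVecLin, ?_, ?_, ?_⟩
  · intro x y h
    simp only [Matrix.mulVecLin_apply] at h
    have hx : Lemb *ᵥ (Bemb *ᵥ x) = Lemb *ᵥ (Bemb *ᵥ y) := by rw [h]
    rwa [Matrix.mulVec_mulVec, Matrix.mulVec_mulVec, hLB, Matrix.one_mulVec,
      Matrix.one_mulVec] at hx
  · intro x y
    simp only [Matrix.mulVecLin_apply]
    calc (Bemb *ᵥ x) ⬝ᵥ (GK3 *ᵥ (Bemb *ᵥ y))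
        = (Bemb *ᵥ x) ⬝ᵥ ((GK3 * Bemb) *ᵥ y) := by rw [Matrix.mulVec_mulVec]
      _ = (x ᵥ* Bembᵀ) ⬝ᵥ ((GK3 * Bemb) *ᵥ y) := by rw [Matrix.vecMul_transpose]
      _ = ((x ᵥ* Bembᵀ) ᵥ* (GK3 * Bemb)) ⬝ᵥ y := by rw [Matrix.dotProduct_mulVec]
      _ = (x ᵥ* (Bembᵀ * (GK3 * Bemb))) ⬝ᵥ y := by rw [Matrix.vecMul_vecMul]
      _ = (x ᵥ* M) ⬝ᵥ y := by rw [← Matrix.mul_assoc, hBGB]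
      _ = x ⬝ᵥ (M *ᵥ y) := (Matrix.dotProduct_mulVec x M y).symm
  · intro v k hk hv
    obtain ⟨u, hu⟩ := hv
    refine ⟨Lemb *ᵥ v, ?_⟩
    simp only [Matrix.mulVecLin_apply] at hu ⊢
    have hu' : u = k • (Lemb *ᵥ v) := by
      have h3 : Lemb *ᵥ (Bemb *ᵥ u) = Lemb *ᵥ (k • v) := by rw [hu]
      rwa [Matrix.mulVec_mulVec, hLB, Matrix.one_mulVec, Matrix.mulVec_smul] at h3
    have h2 : k • (Bemb *ᵥ (Lemb *ᵥ v)) = k • v := by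
      rw [← Matrix.mulVec_smul, ← hu', hu]
    exact smul_right_injective _ hk h2
end

section
/- There exists a primitive embedding ι : ℤ¹⁷ → ℤ²² of (ℤ¹⁷, M) into the K3 lattice together with an injective ℤ-linear map j : ℤ⁵ → ℤ²² whose image equals the orthogonal complement {v ∈ ℤ²² | vᵀ G (ι x) = 0 for all x ∈ ℤ¹⁷} and which satisfies (j a)ᵀ G (j b) = aᵀ (U ⊕ M') b for all a, b ∈ ℤ⁵, where U ⊕ M' is the 5×5 block-diagonal matrix built from U = [[0,1],[1,0]] and M'. (Lattice duality for the transpose-dual pair (U_{1,0}, U_{1,0}).) -/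
open Matrix

def UM' : Matrix (Fin 5) (Fin 5) ℤ :=
  !![0, 1, 0, 0, 0;
    1, 0, 0, 0, 0;
    0, 0, -2, 2, 0;
    0, 0, 2, -2, 3;
    0, 0, 0, 3, -2]


def Bm : Matrix (Fin 22) (Fin 17) ℤ := !![-1, 2, 3, 2, -1, 2, 3, -3, -1, 2, -3, -1, 0, -2, 0, 1, -2;
    -1, 2, 3, 2, 1, 2, 3, -3, -2, 2, -3, -1, 0, -2, 0, 1, -2;
    17414, -7454, 51326, 29368, 0, -1994, -11953, -33865, -18411, -16418, -7486, 5478, 1993, 997, -28402, 8466, -18442;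
    35, -15, 103, 59, 0, -4, -24, -68, -37, -33, -15, 11, 4, 2, -57, 17, -37;
    -3, 2, 3, -3, 0, -3, 4, 8, -2, 5, 2, 4, -1, 6, -6, 0, 1;
    -2, 1, 1, -1, 0, -1, 1, 4, -1, 3, 1, 2, -1, 3, -3, 0, 1;
    -257, 109, -759, -435, 0, 29, 176, 500, 274, 242, 112, -81, -30, -14, 420, -124, 272;
    -569, 242, -1675, -961, 0, 63, 390, 1108, 603, 538, 246, -177, -66, -29, 925, -275, 602;
    -1040, 444, -3061, -1754, 0, 118, 714, 2021, 1101, 982, 448, -326, -120, -57, 1693, -503, 1099;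
    -1386, 590, -4083, -2341, 0, 155, 950, 2699, 1469, 1309, 600, -432, -161, -73, 2256, -671, 1467;
    -897, 382, -2641, -1515, 0, 101, 616, 1746, 951, 848, 388, -279, -105, -47, 1459, -434, 949;
    -472, 201, -1383, -795, 0, 53, 326, 917, 498, 448, 203, -145, -56, -23, 763, -226, 497;
    0, -1, 1, 0, 0, 0, 1, -1, 1, 1, 0, 1, -1, 1, -1, 2, -1;
    1, -1, 0, 1, 0, 1, 0, -4, 1, -1, -1, -1, 0, -2, 2, 1, -1;
    -259, 114, -755, -432, 0, 32, 181, 498, 270, 246, 106, -82, -31, -17, 420, -124, 270;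
    -395, 174, -1147, -658, 0, 46, 275, 761, 410, 375, 164, -123, -47, -22, 635, -189, 412;
    173, -68, 531, 302, 0, -18, -113, -345, -193, -159, -82, 56, 17, 10, -293, 88, -191;
    162, -60, 506, 288, 0, -16, -103, -328, -185, -147, -81, 52, 15, 9, -278, 84, -183;
    85, -29, 269, 153, 0, -7, -52, -174, -99, -76, -45, 26, 7, 4, -147, 45, -98;
    -2, 6, 4, 2, 0, 2, 6, -1, -3, 5, -5, -2, -2, -1, -1, 1, -2;
    -2, 4, 2, 0, 0, 0, 4, 2, -2, 4, -2, 0, -2, 2, -2, 0, 0;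
    -1, 2, 1, 0, 0, 0, 2, 1, -1, 2, -1, 0, -1, 1, -1, 0, 0]

def Cm : Matrix (Fin 22) (Fin 5) ℤ := !![2, 2, 1, 2, 6;
    2, 2, 1, 2, 6;
    -18426, -18426, 12932, 34876, 29398;
    -37, -37, 26, 70, 59;
    -2, -2, 0, -3, -8;
    -1, -1, 0, -2, -4;
    272, 272, -191, -516, -436;
    600, 600, -422, -1140, -966;
    1099, 1099, -772, -2081, -1758;
    1463, 1463, -1030, -2777, -2351;
    947, 947, -666, -1797, -1521;
    497, 497, -349, -943, -798;
    0, 0, 0, 1, -1;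
    1, 1, 0, 2, 3;
    275, 275, -190, -513, -428;
    416, 416, -289, -782, -656;
    -185, -185, 134, 358, 305;
    -173, -173, 128, 340, 294;
    -90, -90, 68, 181, 158;
    3, 3, 1, 2, 6;
    1, 1, 0, 0, 0;
    0, 1, 0, 0, 0]

def Lm : Matrix (Fin 17) (Fin 22) ℤ := !![0, 0, 0, 0, 11, -49, -122, 3, 75, 15, 6, -103, 95, 2, -37, -11, 115, -89, 75, -65, 0, 67;
    0, 0, 0, 16, 2, -11, -27, 2, 15, 3, 2, -22, 20, 1, -9, 0, 24, -20, 18, -15, 0, 13;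
    0, 0, 0, 0, 10, -7, -41, 0, 30, 4, 5, -47, 37, 8, -6, -8, 39, -33, 28, -20, 0, 19;
    0, 0, 0, 47, 6, -3, -22, 1, 18, 1, 4, -28, 21, 3, -1, -4, 21, -18, 14, -10, 0, 9;
    0, 1, 0, 16, 12, -48, -121, 4, 77, 14, 7, -107, 97, 1, -35, -12, 117, -90, 74, -65, 0, 68;
    0, 0, 0, 33, 17, -67, -172, 6, 109, 19, 10, -150, 136, 3, -49, -16, 164, -128, 107, -93, 0, 95;
    0, 0, 0, 0, 14, -58, -144, 3, 92, 17, 7, -125, 115, 1, -42, -15, 139, -106, 87, -77, 0, 82;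
    0, 0, 0, 16, 0, 28, 52, -2, -29, -7, 0, 35, -37, 4, 21, 2, -50, 36, -30, 30, 0, -33;
    0, 0, 0, 16, 4, 8, 4, 0, 1, -2, 3, -6, 1, 4, 6, -2, -4, 1, -1, 4, 0, -6;
    0, 0, 0, 16, 10, -67, -152, 6, 93, 18, 6, -123, 116, -3, -49, -12, 146, -110, 91, -83, 0, 87;
    0, 0, 0, 16, 1, -12, -25, 1, 15, 3, 1, -19, 18, -1, -9, -1, 24, -18, 15, -14, 0, 14;
    0, 0, 0, 0, 7, -29, -74, 2, 45, 9, 4, -63, 58, 2, -22, -6, 69, -54, 46, -40, 0, 40;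
    0, 0, 0, 32, 8, -30, -78, 4, 49, 8, 5, -68, 61, 2, -22, -6, 73, -58, 49, -42, 0, 41;
    0, 0, 0, 32, 18, -66, -172, 6, 110, 19, 10, -152, 137, 4, -48, -17, 164, -128, 107, -93, 0, 96;
    0, 0, 0, 0, 7, 14, 5, -2, 1, -1, 3, -9, 1, 10, 9, -4, -7, 1, 1, 5, 0, -8;
    0, 0, 0, 16, 6, -18, -51, 2, 32, 6, 3, -46, 41, 3, -14, -4, 48, -39, 33, -27, 0, 26;
    0, 0, 0, 32, 16, -54, -145, 5, 93, 16, 9, -130, 116, 5, -40, -14, 139, -109, 90, -77, 0, 79]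

def Lpm : Matrix (Fin 5) (Fin 22) ℤ := !![0, 0, 0, 0, 0, 0, 0, 0, 0, 0, 0, 0, 0, 0, 0, 0, 0, 0, 0, 0, 1, -1;
    0, 0, 0, 0, 0, 0, 0, 0, 0, 0, 0, 0, 0, 0, 0, 0, 0, 0, 0, 0, 0, 1;
    0, 0, 0, 0, 0, 0, 0, 0, 0, 0, 0, 0, 0, 0, 2, 0, 44, 1, -84, 69, -4, 0;
    0, 0, 0, 0, 0, 0, 0, 0, 0, 0, 0, 0, 0, 0, 2, 0, 8, -7, 3, 0, -11, 0;
    0, 0, 0, 0, 0, 0, 0, 0, 0, 0, 0, 0, 0, 0, 0, 0, 1, 0, -2, 2, -1, 0]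

def Wm : Matrix (Fin 22) (Fin 17) ℤ := !![-121, -174, 108, 172, 63, -63, 91, 142, 125, -75, -45, -116, -85, -43, 35, -61, 50;
    -121, -174, 108, 172, 62, -63, 91, 142, 125, -75, -45, -116, -85, -43, 35, -61, 50;
    -1537926, -2158678, 1838340, 2476925, 953654, -353669, 1169388, 2106766, 1907308, -1098846, -572718, -1260880, -675812, -184380, 997342, -581172, 938968;
    -3091, -4339, 3690, 4975, 1915, -715, 2350, 4231, 3830, -2207, -1151, -2536, -1362, -374, 1999, -1170, 1884;
    37, 44, -145, -127, -59, -80, -34, -120, -118, 58, 15, -9, -64, -66, -139, -27, -89;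
    22, 25, -95, -81, -38, -56, -20, -77, -76, 37, 9, -9, -45, -46, -93, -20, -59;
    22725, 31895, -27200, -36625, -14105, 5196, -17282, -31155, -28210, 16248, 8463, 18619, 9960, 2699, -14778, 8573, -13898;
    50212, 70475, -60092, -80920, -31163, 11488, -38185, -68834, -62326, 35898, 18700, 41142, 22012, 5971, -32643, 18946, -30704;
    91809, 128871, -109704, -147841, -56918, 21150, -69808, -125741, -113836, 65584, 34188, 75288, 40377, 11036, -59492, 34710, -56027;
    122504, 171958, -146392, -197278, -75952, 28216, -93149, -167789, -151904, 87514, 45619, 100458, 53872, 14722, -79392, 46311, -74766;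
    79222, 111199, -94727, -127616, -49138, 18197, -60242, -108546, -98276, 56612, 29502, 64943, 34794, 9480, -51407, 29926, -48388;
    41525, 58282, -49702, -66924, -25774, 9493, -31579, -56929, -51548, 29689, 15464, 34020, 18197, 4933, -27003, 15665, -25396;
    -6, -4, 43, 31, 15, 32, 5, 32, 30, -16, -3, 10, 27, 26, 46, 12, 27;
    -21, -23, 94, 79, 37, 57, 19, 76, 74, -37, -9, 10, 46, 47, 93, 20, 58;
    22593, 31708, -27042, -36410, -14022, 5162, -17180, -30973, -28044, 16154, 8414, 18507, 9898, 2681, -14694, 8523, -13817;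
    34385, 48253, -41210, -55450, -21360, 7810, -26150, -47176, -42720, 24602, 12806, 28146, 15022, 4044, -22424, 12949, -21065;
    -15912, -22348, 18876, 25532, 9816, -3788, 12092, 21700, 19632, -11324, -5924, -13104, -7108, -2012, 10152, -6072, 9620;
    -15192, -21345, 17937, 24321, 9342, -3693, 11541, 20661, 18684, -10785, -5655, -12546, -6855, -1983, 9594, -5832, 9129;
    -8078, -11349, 9545, 12937, 4970, -1957, 6137, 10991, 9940, -5737, -3007, -6668, -3639, -1049, 5110, -3098, 4859;
    -122, -175, 107, 171, 62, -63, 91, 141, 124, -75, -45, -116, -85, -43, 34, -62, 49;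
    0, 0, 0, 0, 0, 0, 0, 0, 0, 0, 0, 0, 0, 0, 0, 0, 0;
    0, 0, 0, 0, 0, 0, 0, 0, 0, 0, 0, 0, 0, 0, 0, 0, 0]

set_option maxRecDepth 2000000 in
set_option maxHeartbeats 8000000 in
lemma hE1 : Bmᵀ * (GK3 * Bm) = M := by decide

set_option maxRecDepth 2000000 in
set_option maxHeartbeats 8000000 in
lemma hE2 : Lm * Bm = 1 := by decide

set_option maxRecDepth 2000000 in
set_option maxHeartbeats 8000000 in
lemma hE3 : Cmᵀ * (GK3 * Cm) = UM' := by decide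

set_option maxRecDepth 2000000 in
set_option maxHeartbeats 8000000 in
lemma hE4 : Cmᵀ * (GK3 * Bm) = 0 := by decide

set_option maxRecDepth 2000000 in
set_option maxHeartbeats 8000000 in
lemma hE5 : Lpm * Cm = 1 := by decide

set_option maxRecDepth 2000000 in
set_option maxHeartbeats 8000000 in
lemma hE6 : Cm * Lpm + Wm * (Bmᵀ * GK3) = 1 := by decide

set_option maxRecDepth 2000000 in
set_option maxHeartbeats 8000000 in
lemma hGsymm : GK3ᵀ = GK3 := by decide

lemma mulVec_dot {m n : ℕ} (P : Matrix (Fin m) (Fin n) ℤ) (x : Fin n → ℤ) (w : Fin m → ℤ) :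
    (P *ᵥ x) ⬝ᵥ w = x ⬝ᵥ (Pᵀ *ᵥ w) := by
  rw [dotProduct_comm, Matrix.dotProduct_mulVec, ← Matrix.vecMul_transpose,
    dotProduct_comm, Matrix.transpose_transpose]

lemma gsym_dot (u w : Fin 22 → ℤ) : u ⬝ᵥ (GK3 *ᵥ w) = w ⬝ᵥ (GK3 *ᵥ u) := by
  rw [dotProduct_comm, mulVec_dot, hGsymm]

lemma dot_aux {k l : ℕ} (P : Matrix (Fin 22) (Fin k) ℤ) (Q : Matrix (Fin 22) (Fin l) ℤ)
    (x : Fin k → ℤ) (y : Fin l → ℤ) :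
    (P *ᵥ x) ⬝ᵥ (GK3 *ᵥ (Q *ᵥ y)) = x ⬝ᵥ ((Pᵀ * (GK3 * Q)) *ᵥ y) := by
  rw [mulVec_dot, Matrix.mulVec_mulVec, Matrix.mulVec_mulVec, Matrix.mul_assoc]

theorem stmt_10 :
    ∃ ι : (Fin 17 → ℤ) →ₗ[ℤ] (Fin 22 → ℤ),
      Function.Injective ι ∧
      (∀ x y : Fin 17 → ℤ, ι x ⬝ᵥ (GK3 *ᵥ ι y) = x ⬝ᵥ (M *ᵥ y)) ∧
      (∀ (v : Fin 22 → ℤ) (k : ℤ), k ≠ 0 → k • v ∈ LinearMap.range ι → v ∈ LinearMap.range ι) ∧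
      ∃ j : (Fin 5 → ℤ) →ₗ[ℤ] (Fin 22 → ℤ),
        Function.Injective j ∧
        (∀ v : Fin 22 → ℤ, v ∈ LinearMap.range j ↔ ∀ x : Fin 17 → ℤ, v ⬝ᵥ (GK3 *ᵥ ι x) = 0) ∧
        (∀ a b : Fin 5 → ℤ, j a ⬝ᵥ (GK3 *ᵥ j b) = a ⬝ᵥ (UM' *ᵥ b)) := by
  refine ⟨Bm.mulVecLin, ?_, ?_, ?_, Cm.mulVecLin, ?_, ?_, ?_⟩
  · intro x y h
    simp only [Matrix.mulVecLin_apply] at h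
    have h2 : Lm *ᵥ (Bm *ᵥ x) = Lm *ᵥ (Bm *ᵥ y) := by rw [h]
    simpa [Matrix.mulVec_mulVec, hE2] using h2
  · intro x y
    simp only [Matrix.mulVecLin_apply]
    rw [dot_aux, hE1]
  · rintro v k hk ⟨x, hx⟩
    simp only [Matrix.mulVecLin_apply] at hx
    refine ⟨Lm *ᵥ v, ?_⟩
    simp only [Matrix.mulVecLin_apply]
    apply smul_right_injective (Fin 22 → ℤ) hk
    calc k • (Bm *ᵥ (Lm *ᵥ v)) = Bm *ᵥ (Lm *ᵥ (k • v)) := by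
          rw [Matrix.mulVec_smul, Matrix.mulVec_smul]
      _ = Bm *ᵥ (Lm *ᵥ (Bm *ᵥ x)) := by rw [hx]
      _ = k • v := by
          have hlbx : Lm *ᵥ (Bm *ᵥ x) = x := by
            rw [Matrix.mulVec_mulVec, hE2, Matrix.one_mulVec]
          rw [hlbx, hx]
  · intro x y h
    simp only [Matrix.mulVecLin_apply] at h
    have h2 : Lpm *ᵥ (Cm *ᵥ x) = Lpm *ᵥ (Cm *ᵥ y) := by rw [h]
    simpa [Matrix.mulVec_mulVec, hE5] using h2
  · intro v
    constructor
    · rintro ⟨a, rfl⟩ x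
      simp only [Matrix.mulVecLin_apply]
      rw [dot_aux, hE4, Matrix.zero_mulVec, dotProduct_zero]
    · intro hv
      have hz : (Bmᵀ * GK3) *ᵥ v = 0 := by
        funext i
        have h1 := hv (Pi.single i 1)
        simp only [Matrix.mulVecLin_apply] at h1
        have h2 : (Bm *ᵥ Pi.single i 1) ⬝ᵥ (GK3 *ᵥ v) = 0 := by
          rw [gsym_dot] at h1; exact h1
        rw [mulVec_dot, Matrix.mulVec_mulVec] at h2
        simpa using h2
      refine ⟨Lpm *ᵥ v, ?_⟩
      simp only [Matrix.mulVecLin_apply]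
      have := congrArg (fun (A : Matrix (Fin 22) (Fin 22) ℤ) => A *ᵥ v) hE6
      simp only [Matrix.add_mulVec, Matrix.one_mulVec] at this
      rw [← Matrix.mulVec_mulVec, ← Matrix.mulVec_mulVec, hz, Matrix.mulVec_zero,
        add_zero] at this
      exact this
  · intro a b
    simp only [Matrix.mulVecLin_apply]
    rw [dot_aux, hE3]
end
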